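/- arXiv:2205.11691 — 3 statements merged into one kernel-verified Lean document; each statement's English description precedes it below -/
import Mathlib

section
/- (Theorem 1, main part.) Let k, F, d be positive integers and let f : (ℝ^F)^k → ℝ^d be a permutation-invariant multilinear polynomial map. Then f can be computed by a CP layer with linear activation: there exist a positive integer R and matrices A ∈ ℝ^{(F+1)×R}, B ∈ ℝ^{d×R} such that for all x_1,…,x_k ∈ ℝ^F and all i ∈ {1,…,d}, f(x_1,…,x_k)_i = ∑_{r=1}^R B_{i,r} ∏_{ℓ=1}^k ( ∑_{j=1}^{F+1} A_{j,r} (x̃_ℓ)_j ). -/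
/-!
Every factor `(x ℓ) j ^ e` with `e ∈ {0, 1}` is a coordinate of the homogeneous vector
`x̃ ℓ` (the last one, equal to `1`, when `e = 0`), so a monomial is the diagonal product of the
`k × k` matrix `(x̃ ℓ (c m))_{m,ℓ}`, where `c m` is the coordinate read by the `m`-th factor.
Averaging over permutations, which leaves `f` unchanged, turns each monomial into the permanent of
that matrix divided by `k!`, and Ryser's formula writes a permanent as a signed sum over row subsets
`S` of products `∏ ℓ ∑ m ∈ S, x̃ ℓ (c m)`. Each such product is one rank-one term `∏ ℓ ⟪a, x̃ ℓ⟫`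
of a CP layer, with `a j` the number of `m ∈ S` for which `c m = j`.
-/

/-- Homogeneous coordinates of a vector `x ∈ ℝ^F`: append an entry equal to `1`. -/
def homCoord {F : ℕ} (x : Fin F → ℝ) : Fin (F + 1) → ℝ := Fin.snoc x 1

open Finset

section Ryser

variable {n R : Type*} [Fintype n] [DecidableEq n] [CommRing R]

theorem Finset.sum_superset_neg_one_pow_card_compl (T : Finset n) :
    ∑ S with T ⊆ S, (-1 : R) ^ #Sᶜ = if T = univ then 1 else 0 := by
  have hcompl : ∑ S with T ⊆ S, (-1 : R) ^ #Sᶜ = ∑ U ∈ Tᶜ.powerset, (-1 : R) ^ #U :=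
    sum_nbij' compl compl (by simp) (by simp [subset_compl_comm])
      (by simp) (by simp) (by simp)
  have h := congrArg (Int.cast : ℤ → R) (sum_powerset_neg_one_pow_card (x := Tᶜ))
  push_cast at h
  simpa [hcompl, compl_eq_empty_iff] using h

theorem sum_filter_surjective_eq_sum_perm {M : Type*} [AddCommMonoid M] (h : (n → n) → M) :
    ∑ g with Function.Surjective g, h g = ∑ σ : Equiv.Perm n, h σ := by
  symm
  refine sum_bij (fun σ _ => ⇑σ) (fun σ _ => by simpa using σ.surjective)
    (fun σ _ τ _ h => DFunLike.coe_injective h) (fun g hg => ?_) (fun _ _ => rfl)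
  have hbij : Function.Bijective g :=
    ⟨Finite.injective_iff_surjective.mpr (mem_filter.mp hg).2, (mem_filter.mp hg).2⟩
  exact ⟨Equiv.ofBijective g hbij, mem_univ _, rfl⟩

theorem Matrix.permanent_eq_sum_finset_prod_sum (M : Matrix n n R) :
    M.permanent = ∑ S : Finset n, (-1) ^ #Sᶜ * ∏ j, ∑ i ∈ S, M i j := by
  calc M.permanent = ∑ g : n → n, (if univ.image g = univ then 1 else 0) * ∏ j, M (g j) j := by
        rw [Matrix.permanent, ← sum_filter_surjective_eq_sum_perm fun g => ∏ i, M (g i) i,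
          sum_filter]
        refine sum_congr rfl fun g _ => ?_
        rw [ite_mul, one_mul, zero_mul]
        exact if_congr (by simp [eq_univ_iff_forall, Function.Surjective]) rfl rfl
    _ = ∑ g : n → n, (∑ S with univ.image g ⊆ S, (-1) ^ #Sᶜ) * ∏ j, M (g j) j := by
        simp_rw [sum_superset_neg_one_pow_card_compl]
    _ = ∑ S : Finset n, ∑ g ∈ Fintype.piFinset fun _ => S, (-1) ^ #Sᶜ * ∏ j, M (g j) j := by
        simp_rw [sum_mul]
        exact sum_comm' fun g S => by simp [image_subset_iff]
    _ = ∑ S : Finset n, (-1) ^ #Sᶜ * ∏ j, ∑ i ∈ S, M i j := by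
        simp_rw [prod_univ_sum, mul_sum]

end Ryser

section Monomial

variable {F : ℕ} {n : Type*} [Fintype n] [DecidableEq n]

def homIndex (j : Fin F) (e : Fin 2) : Fin (F + 1) :=
  if e = 1 then j.castSucc else Fin.last F

theorem homCoord_homIndex (x : Fin F → ℝ) (j : Fin F) (e : Fin 2) :
    homCoord x (homIndex j e) = x j ^ (e : ℕ) := by
  fin_cases e <;> simp [homIndex, homCoord]

def monomialMatrix (J : n → Fin F) (ι : n → Fin 2) (x : n → Fin F → ℝ) :
    Matrix n n ℝ :=
  Matrix.of fun m ℓ => homCoord (x ℓ) (homIndex (J m) (ι m))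

theorem sum_perm_prod_pow_eq_permanent (J : n → Fin F) (ι : n → Fin 2) (x : n → Fin F → ℝ) :
    ∑ σ : Equiv.Perm n, ∏ m, (x ∘ ⇑σ⁻¹) m (J m) ^ (ι m : ℕ) =
      (monomialMatrix J ι x).permanent := by
  refine sum_congr rfl fun σ _ => ?_
  rw [← Equiv.prod_comp σ]
  simp [monomialMatrix, homCoord_homIndex]

theorem card_perm_mul_eq_sum_permanent {g : (n → Fin F → ℝ) → ℝ}
    (τ : (n → Fin F) → (n → Fin 2) → ℝ)
    (hτ : ∀ x, g x = ∑ J, ∑ ι, τ J ι * ∏ m, x m (J m) ^ (ι m : ℕ))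
    (hg : ∀ (φ : Equiv.Perm n) x, g (x ∘ φ) = g x) (x : n → Fin F → ℝ) :
    ((Fintype.card n).factorial : ℝ) * g x =
      ∑ J, ∑ ι, τ J ι * (monomialMatrix J ι x).permanent := by
  calc ((Fintype.card n).factorial : ℝ) * g x = ∑ σ : Equiv.Perm n, g (x ∘ ⇑σ⁻¹) := by
        simp [hg, Fintype.card_perm]
    _ = _ := by
        simp_rw [hτ, ← sum_perm_prod_pow_eq_permanent, mul_sum]
        rw [sum_comm]
        exact sum_congr rfl fun J _ => sum_comm

theorem permanent_monomialMatrix (J : n → Fin F) (ι : n → Fin 2) (x : n → Fin F → ℝ) :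
    (monomialMatrix J ι x).permanent = ∑ S : Finset n, (-1) ^ #Sᶜ *
      ∏ ℓ, ∑ j, (#{m ∈ S | homIndex (J m) (ι m) = j} : ℝ) * homCoord (x ℓ) j := by
  rw [Matrix.permanent_eq_sum_finset_prod_sum]
  refine sum_congr rfl fun S _ => congrArg _ <| prod_congr rfl fun ℓ _ => ?_
  simp_rw [← nsmul_eq_mul, ← sum_const]
  exact (sum_fiberwise' S _ (homCoord (x ℓ))).symm

end Monomial

theorem perm_invariant_multilinear_map_computed_by_cp_layer_general
    (k F d : ℕ) (hF : 0 < F)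
    (f : (Fin k → Fin F → ℝ) → Fin d → ℝ)
    (hf : ∃ τ : Fin d → (Fin k → Fin F) → (Fin k → Fin 2) → ℝ,
      ∀ (x : Fin k → Fin F → ℝ) (i : Fin d),
        f x i = ∑ J : Fin k → Fin F, ∑ ι : Fin k → Fin 2,
          τ i J ι * ∏ ℓ : Fin k, (x ℓ (J ℓ)) ^ (ι ℓ : ℕ))
    (hperm : ∀ (φ : Equiv.Perm (Fin k)) (x : Fin k → Fin F → ℝ), f (x ∘ φ) = f x) :
    ∃ (R : ℕ), 0 < R ∧
      ∃ (A : Fin (F + 1) → Fin R → ℝ) (B : Fin d → Fin R → ℝ),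
        ∀ (x : Fin k → Fin F → ℝ) (i : Fin d),
          f x i = ∑ r : Fin R,
            B i r * ∏ ℓ : Fin k, (∑ j : Fin (F + 1), A j r * homCoord (x ℓ) j) := by
  obtain ⟨τ, hτ⟩ := hf
  let I := ((Fin k → Fin F) × (Fin k → Fin 2)) × Finset (Fin k)
  let A : Fin (F + 1) → I → ℝ := fun j p => #{m ∈ p.2 | homIndex (p.1.1 m) (p.1.2 m) = j}
  let B : Fin d → I → ℝ := fun i p => (k.factorial : ℝ)⁻¹ * ((-1) ^ #p.2ᶜ * τ i p.1.1 p.1.2)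
  let e := Fintype.equivFin I
  refine ⟨Fintype.card I, Fintype.card_pos_iff.mpr ⟨((fun _ => ⟨0, hF⟩, 0), ∅)⟩,
    fun j r => A j (e.symm r), fun i r => B i (e.symm r), fun x i => ?_⟩
  have hsym := card_perm_mul_eq_sum_permanent (τ i) (fun x => hτ x i)
    (fun φ x => congrFun (hperm φ x) i) x
  rw [Fintype.card_fin] at hsym
  rw [e.symm.sum_comp (fun p => B i p * ∏ ℓ, ∑ j, A j p * homCoord (x ℓ) j),
    (eq_inv_mul_iff_mul_eq₀ (by positivity)).mpr hsym]
  simp only [B, A, mul_assoc, ← mul_sum]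
  congr 1
  rw [Fintype.sum_prod_type, Fintype.sum_prod_type]
  refine sum_congr rfl fun J _ => sum_congr rfl fun ι _ => ?_
  rw [permanent_monomialMatrix, mul_sum]
  exact sum_congr rfl fun S _ => mul_left_comm _ _ _

/-- Theorem 1 (main part): every permutation-invariant multilinear polynomial map can
be computed by a CP layer with linear activation. -/
theorem perm_invariant_multilinear_map_computed_by_cp_layer
    (k F d : ℕ) (hk : 0 < k) (hF : 0 < F) (hd : 0 < d)
    (f : (Fin k → Fin F → ℝ) → Fin d → ℝ)
    (hf : ∃ τ : Fin d → (Fin k → Fin F) → (Fin k → Fin 2) → ℝ,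
      ∀ (x : Fin k → Fin F → ℝ) (i : Fin d),
        f x i = ∑ J : Fin k → Fin F, ∑ ι : Fin k → Fin 2,
          τ i J ι * ∏ ℓ : Fin k, (x ℓ (J ℓ)) ^ (ι ℓ : ℕ))
    (hperm : ∀ (φ : Equiv.Perm (Fin k)) (x : Fin k → Fin F → ℝ), f (x ∘ φ) = f x) :
    ∃ (R : ℕ), 0 < R ∧
      ∃ (A : Fin (F + 1) → Fin R → ℝ) (B : Fin d → Fin R → ℝ),
        ∀ (x : Fin k → Fin F → ℝ) (i : Fin d),
          f x i = ∑ r : Fin R,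
            B i r * ∏ ℓ : Fin k, (∑ j : Fin (F + 1), A j r * homCoord (x ℓ) j) :=
  perm_invariant_multilinear_map_computed_by_cp_layer_general k F d hF f hf hperm
end

section
/- (Theorem 2, weighted-sum form.) Let k, F be positive integers and α ∈ ℝ. There exist matrices A ∈ ℝ^{(F+1)×(F·k)} and B ∈ ℝ^{F×(F·k)} such that for all x_1,…,x_k ∈ ℝ^F and all i ∈ {1,…,F}: ∑_{r=1}^{F·k} B_{i,r} ∏_{ℓ=1}^k ( ∑_{j=1}^{F+1} A_{j,r} (x̃_ℓ)_j ) = α ∑_{ℓ=1}^k (x_ℓ)_i. In other words, a CP layer of rank F·k with linear activation can compute the map (x_1,…,x_k) ↦ α ∑_{ℓ=1}^k x_ℓ. -/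
/-!
For distinct nodes `t₁, …, t_k`, Lagrange interpolation reads off the coefficient of `X^(k-1)` of
a polynomial `p` of degree `< k` as `∑ₘ p(tₘ) / ∏_{n ≠ m} (tₘ - tₙ)`. Apply this to
`∏ₗ (X + yₗ) - ∏ₘ (X - tₘ)`: its values at the nodes are `∏ₗ (yₗ + tₘ)` and its coefficient of
`X^(k-1)` is `∑ₗ yₗ + ∑ₘ tₘ`. Choosing nodes with `∑ₘ tₘ = 0` and weights
`cₘ = α / ∏_{n ≠ m} (tₘ - tₙ)` gives `∑ₘ cₘ ∏ₗ (yₗ + tₘ) = α ∑ₗ yₗ`, a rank-`k` CP expression.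
The layer applies it to each coordinate `f` separately, using the rank-one terms indexed by
`(f, m)`, whose linear factor is `x_f + tₘ`.
-/

open Finset Polynomial

theorem Polynomial.nextCoeff_prod_X_add_C {ι R : Type*} [CommRing R] (s : Finset ι)
    (f : ι → R) : nextCoeff (∏ i ∈ s, (X + C (f i))) = ∑ i ∈ s, f i := by
  rw [Monic.nextCoeff_prod _ _ fun i _ => monic_X_add_C (f i)]
  simp only [nextCoeff_X_add_C]

theorem sum_prod_add_div_prod_sub {K ι κ : Type*} [Field K] [Fintype ι] [DecidableEq ι]
    [Fintype κ] {t : ι → K} (ht : Function.Injective t) (hcard : Fintype.card κ = Fintype.card ι)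
    (y : κ → K) :
    ∑ m, (∏ ℓ, (y ℓ + t m)) / ∏ n ∈ univ.erase m, (t m - t n) = ∑ ℓ, y ℓ + ∑ m, t m := by
  set p : K[X] := ∏ ℓ, (X + C (y ℓ))
  set q : K[X] := Lagrange.nodal univ t
  have hp_monic : p.Monic := monic_prod_of_monic _ _ fun ℓ _ => monic_X_add_C (y ℓ)
  have hp_deg : p.natDegree = #(univ : Finset ι) := by
    rw [natDegree_prod_of_monic _ _ fun ℓ _ => monic_X_add_C (y ℓ)]
    simp [hcard]
  have hdeg : (p - q).degree < #(univ : Finset ι) := by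
    rw [← hp_deg, ← degree_eq_natDegree hp_monic.ne_zero]
    refine degree_sub_lt_left ?_ hp_monic.ne_zero ?_
    · rw [degree_eq_natDegree hp_monic.ne_zero, hp_deg, Lagrange.degree_nodal]
    · rw [hp_monic.leadingCoeff, Lagrange.nodal_monic.leadingCoeff]
  have hcoeff : (p - q).coeff (#(univ : Finset ι) - 1) = ∑ ℓ, y ℓ + ∑ m, t m := by
    rcases isEmpty_or_nonempty ι with hι | hι
    · have : IsEmpty κ := Fintype.card_eq_zero_iff.mp (hcard.trans Fintype.card_eq_zero)
      simp [p, q, Lagrange.nodal]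
    have hpos : 0 < #(univ : Finset ι) := card_pos.mpr univ_nonempty
    rw [coeff_sub, ← hp_deg, ← nextCoeff_of_natDegree_pos (hp_deg ▸ hpos)]
    have hq : q.coeff (p.natDegree - 1) = -∑ m, t m := by
      rw [hp_deg, ← Lagrange.natDegree_nodal (v := t), ← nextCoeff_of_natDegree_pos
        (Lagrange.natDegree_nodal (v := t) ▸ hpos)]
      exact prod_X_sub_C_nextCoeff t
    rw [hq, nextCoeff_prod_X_add_C, sub_neg_eq_add]
  rw [← hcoeff, Lagrange.coeff_eq_sum ht.injOn hdeg]
  refine sum_congr rfl fun m _ => ?_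
  simp [p, q, eval_prod, Lagrange.eval_nodal_at_node (mem_univ m), add_comm]

theorem exists_injective_sum_eq_zero (K : Type*) [Field K] [CharZero K] (k : ℕ) :
    ∃ t : Fin k → K, Function.Injective t ∧ ∑ m, t m = 0 := by
  refine ⟨fun m => m - (∑ n : Fin k, (n : K)) / k, fun m n h => ?_, ?_⟩
  · simpa [Fin.ext_iff] using h
  · rcases eq_or_ne k 0 with rfl | hk
    · simp
    · simp [sum_sub_distrib, mul_div_cancel₀ _ (Nat.cast_ne_zero.mpr hk : (k : K) ≠ 0)]

theorem sum_snoc_mul_homCoord {F : ℕ} (u x : Fin F → ℝ) (a : ℝ) :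
    ∑ j, Fin.snoc (α := fun _ => ℝ) u a j * homCoord x j = ∑ f, u f * x f + a := by
  simp [Fin.sum_univ_castSucc, homCoord]

theorem cp_layer_computes_weighted_sum_general
    (k F : ℕ) (α : ℝ) :
    ∃ (A : Fin (F + 1) → Fin (F * k) → ℝ) (B : Fin F → Fin (F * k) → ℝ),
      ∀ (x : Fin k → Fin F → ℝ) (i : Fin F),
        ∑ r : Fin (F * k),
            B i r * ∏ ℓ : Fin k, (∑ j : Fin (F + 1), A j r * homCoord (x ℓ) j)
          = α * ∑ ℓ : Fin k, x ℓ i := by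
  obtain ⟨t, ht, ht_sum⟩ := exists_injective_sum_eq_zero ℝ k
  set e : Fin (F * k) ≃ Fin F × Fin k := finProdFinEquiv.symm
  set c : Fin k → ℝ := fun m => α / ∏ n ∈ univ.erase m, (t m - t n)
  refine ⟨fun j r => Fin.snoc (α := fun _ => ℝ) (Pi.single (e r).1 1) (t (e r).2) j,
    fun i r => if (e r).1 = i then c (e r).2 else 0, fun x i => ?_⟩
  calc _ = ∑ p : Fin F × Fin k, if p.1 = i then c p.2 * ∏ ℓ, (x ℓ p.1 + t p.2) else 0 := by
        rw [← e.symm.sum_comp]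
        simp [e, sum_snoc_mul_homCoord, Pi.single_apply]
    _ = α * ∑ m, (∏ ℓ, (x ℓ i + t m)) / ∏ n ∈ univ.erase m, (t m - t n) := by
        simp [Fintype.sum_prod_type, c, mul_sum, mul_div_assoc', div_mul_eq_mul_div]
    _ = α * ∑ ℓ, x ℓ i := by
        rw [sum_prod_add_div_prod_sub ht rfl, ht_sum, add_zero]

/-- Theorem 2 (weighted-sum form): a CP layer of rank `F·k` with linear activation can
compute the map `(x_1,…,x_k) ↦ α ∑_ℓ x_ℓ`. -/
theorem cp_layer_computes_weighted_sum
    (k F : ℕ) (hk : 0 < k) (hF : 0 < F) (α : ℝ) :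
    ∃ (A : Fin (F + 1) → Fin (F * k) → ℝ) (B : Fin F → Fin (F * k) → ℝ),
      ∀ (x : Fin k → Fin F → ℝ) (i : Fin F),
        ∑ r : Fin (F * k),
            B i r * ∏ ℓ : Fin k, (∑ j : Fin (F + 1), A j r * homCoord (x ℓ) j)
          = α * ∑ ℓ : Fin k, x ℓ i :=
  cp_layer_computes_weighted_sum_general k F α
end

section
/- (Theorem 3.) Let F, d, R be positive integers and let k ≥ 2. Consider the space ℝ^{(F+1)×R} × ℝ^{d×R} of CP-layer parameter pairs (W, A), where the pair (W, A) computes the map f_{W,A} : (ℝ^F)^k → ℝ^d with f_{W,A}(x_1,…,x_k)_i = ∑_{r=1}^R A_{i,r} ∏_{ℓ=1}^k ( ∑_{j=1}^{F+1} W_{j,r} (x̃_ℓ)_j ). Then the set of parameter pairs (W, A) for which there exist a positive integer R', matrices M ∈ ℝ^{d×R'} and V ∈ ℝ^{F×R'}, and functions σ, σ' : ℝ → ℝ (applied componentwise) such that f_{W,A}(x_1,…,x_k) = σ'( M σ( ∑_{ℓ=1}^k V^T x_ℓ ) ) for all x_1,…,x_k ∈ ℝ^F, has Lebesgue measure zero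 in ℝ^{(F+1)R + dR}. Consequently, if the entries of (W, A) are drawn from any probability distribution absolutely continuous with respect to Lebesgue measure, then with probability one the function computed by the CP layer cannot be computed by any sum-pooling architecture of the above form. -/
/-!
The inputs `(u, u, 0, …, 0)` and `(2u, 0, …, 0)`, with `u` the first basis vector, have the same
sum, so every sum-pooling architecture takes the same value on them. The CP layer's values on them
differ by `∑ r, A i r * W 1 r ^ 2 * W (F+1) r ^ (k-2)`. For almost every `W` this is a nonzero linear form
in `A`, so by Fubini its zero set, which contains every pair `(W, A)` realised by sum pooling, is
Lebesgue-null.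
-/

open MeasureTheory Measure

section NullSets

variable {E : Type*} [NormedAddCommGroup E] [NormedSpace ℝ E] [MeasurableSpace E]
  [BorelSpace E] [FiniteDimensional ℝ E]

theorem addHaar_setOf_linearMap_eq_zero (μ : Measure E) [μ.IsAddHaarMeasure]
    {φ : E →ₗ[ℝ] ℝ} (hφ : φ ≠ 0) : μ {x | φ x = 0} = 0 :=
  addHaar_submodule μ (LinearMap.ker φ) fun h => hφ (LinearMap.ker_eq_top.mp h)

theorem prod_setOf_linearMap_eq_zero {X : Type*} [MeasurableSpace X] (μ : Measure X) [SFinite μ]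
    (ν : Measure E) [ν.IsAddHaarMeasure] (φ : X → E →ₗ[ℝ] ℝ)
    (hφ : Measurable fun p : X × E => φ p.1 p.2) (hne : ∀ᵐ x ∂μ, φ x ≠ 0) :
    μ.prod ν {p | φ p.1 p.2 = 0} = 0 := by
  refine (measure_prod_null (hφ (measurableSet_singleton 0))).mpr ?_
  filter_upwards [hne] with x hx
  exact addHaar_setOf_linearMap_eq_zero ν hx

end NullSets

theorem ae_apply_apply_ne_zero {ι κ : Type*} [Fintype ι] [Fintype κ] (i : ι) (j : κ) :
    ∀ᵐ W : ι → κ → ℝ, W i j ≠ 0 := by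
  have hφ : (LinearMap.proj j ∘ₗ LinearMap.proj i : (ι → κ → ℝ) →ₗ[ℝ] ℝ) ≠ 0 :=
    fun h => one_ne_zero (LinearMap.congr_fun h fun _ _ => 1)
  exact measure_eq_zero_iff_ae_notMem.mp (addHaar_setOf_linearMap_eq_zero volume hφ)

theorem volume_setOf_sum_mul_sq_mul_pow_eq_zero {ι κ ρ : Type*} [Fintype ι] [Fintype κ]
    [Fintype ρ] [Nonempty ρ] (i : κ) (j j' : ι) (m : ℕ) :
    volume {p : (ι → ρ → ℝ) × (κ → ρ → ℝ) |
      ∑ r, p.2 i r * p.1 j r ^ 2 * p.1 j' r ^ m = 0} = 0 := by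
  classical
  obtain ⟨r₀⟩ := ‹Nonempty ρ›
  let φ : (ι → ρ → ℝ) → (κ → ρ → ℝ) →ₗ[ℝ] ℝ := fun W =>
    ∑ r, (W j r ^ 2 * W j' r ^ m) •
      (LinearMap.proj r ∘ₗ LinearMap.proj (R := ℝ) (φ := fun _ : κ => ρ → ℝ) i)
  have hφ : ∀ W A, φ W A = ∑ r, A i r * W j r ^ 2 * W j' r ^ m := fun W A => by
    simp only [φ, LinearMap.sum_apply, LinearMap.smul_apply, LinearMap.comp_apply,
      LinearMap.proj_apply, smul_eq_mul]
    exact Finset.sum_congr rfl fun r _ => by ring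
  have hne : ∀ᵐ W : ι → ρ → ℝ, φ W ≠ 0 := by
    filter_upwards [ae_apply_apply_ne_zero j r₀, ae_apply_apply_ne_zero j' r₀] with W hj hj' hW
    have h := LinearMap.congr_fun hW (Pi.single i (Pi.single r₀ 1))
    simp [hφ, Pi.single_apply, hj, hj'] at h
  have hmeas : Measurable fun p : (ι → ρ → ℝ) × (κ → ρ → ℝ) => φ p.1 p.2 := by
    simp only [hφ]
    fun_prop
  simpa only [hφ, ← volume_eq_prod] using
    prod_setOf_linearMap_eq_zero volume volume φ hmeas hne

section Architectures

variable {F d k : ℕ}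

def cpLayer {R : ℕ} (W : Fin (F + 1) → Fin R → ℝ) (A : Fin d → Fin R → ℝ)
    (x : Fin k → Fin F → ℝ) (i : Fin d) : ℝ :=
  ∑ r, A i r * ∏ ℓ, ∑ j, W j r * homCoord (x ℓ) j

def sumPooling {R' : ℕ} (M : Fin d → Fin R' → ℝ) (V : Fin F → Fin R' → ℝ) (σ σ' : ℝ → ℝ)
    (x : Fin k → Fin F → ℝ) (i : Fin d) : ℝ :=
  σ' (∑ r', M i r' * σ (∑ ℓ, ∑ j, V j r' * x ℓ j))

theorem sumPooling_eq_of_sum_eq {R' : ℕ} (M : Fin d → Fin R' → ℝ) (V : Fin F → Fin R' → ℝ)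
    (σ σ' : ℝ → ℝ) {x y : Fin k → Fin F → ℝ} (hxy : ∑ ℓ, x ℓ = ∑ ℓ, y ℓ) :
    sumPooling M V σ σ' x = sumPooling M V σ σ' y := by
  have pooled : ∀ (z : Fin k → Fin F → ℝ) r', ∑ ℓ, ∑ j, V j r' * z ℓ j =
      ∑ j, V j r' * (∑ ℓ, z ℓ) j := fun z r' => by
    simp only [Finset.sum_apply, Finset.mul_sum]
    exact Finset.sum_comm
  ext i
  simp only [sumPooling, pooled, hxy]

def pairInput {m : ℕ} (u v : Fin F → ℝ) : Fin (m + 2) → Fin F → ℝ :=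
  Fin.cons u (Fin.cons v 0)

theorem sum_pairInput {m : ℕ} (u v : Fin F → ℝ) : ∑ ℓ, pairInput (m := m) u v ℓ = u + v := by
  simp [pairInput, Fin.sum_univ_succ]

theorem sum_mul_homCoord (w : Fin (F + 1) → ℝ) (x : Fin F → ℝ) :
    ∑ j, w j * homCoord x j = ∑ j : Fin F, w j.castSucc * x j + w (Fin.last F) := by
  simp [Fin.sum_univ_castSucc, homCoord]

theorem cpLayer_pairInput {R m : ℕ} (W : Fin (F + 1) → Fin R → ℝ) (A : Fin d → Fin R → ℝ)
    (u v : Fin F → ℝ) (i : Fin d) :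
    cpLayer W A (pairInput (m := m) u v) i =
      ∑ r, A i r * ((∑ j, W j r * homCoord u j) * (∑ j, W j r * homCoord v j) *
        W (Fin.last F) r ^ m) := by
  simp [cpLayer, pairInput, Fin.prod_univ_succ, sum_mul_homCoord, mul_assoc]

theorem cpLayer_sub_cpLayer {R m : ℕ} (W : Fin (F + 1) → Fin R → ℝ) (A : Fin d → Fin R → ℝ)
    (e : Fin F) (i : Fin d) :
    cpLayer W A (pairInput (m := m) (Pi.single e 1) (Pi.single e 1)) i -
      cpLayer W A (pairInput (m := m) (Pi.single e 2) 0) i =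
      ∑ r, A i r * W e.castSucc r ^ 2 * W (Fin.last F) r ^ m := by
  simp only [cpLayer_pairInput, sum_mul_homCoord, ← Finset.sum_sub_distrib]
  refine Finset.sum_congr rfl fun r _ => ?_
  simp only [Pi.single_apply, mul_ite, mul_one, mul_zero, Finset.sum_ite_eq', Finset.mem_univ,
    if_true, Pi.zero_apply, Finset.sum_const_zero, zero_add]
  ring

end Architectures

/-- Theorem 3: for `k ≥ 2`, the set of CP-layer parameter pairs `(W, A)` whose
computed function can be expressed by some sum-pooling architecture
`(x_1,…,x_k) ↦ σ'(M σ(∑_ℓ Vᵀ x_ℓ))` has Lebesgue measure zero in the parameter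
space. -/
theorem cp_layer_not_sum_pooling_almost_surely
    (k F d R : ℕ) (hk : 2 ≤ k) (hF : 0 < F) (hd : 0 < d) (hR : 0 < R) :
    volume {p : (Fin (F + 1) → Fin R → ℝ) × (Fin d → Fin R → ℝ) |
      ∃ (R' : ℕ), 0 < R' ∧
        ∃ (M : Fin d → Fin R' → ℝ) (V : Fin F → Fin R' → ℝ) (σ σ' : ℝ → ℝ),
          ∀ (x : Fin k → Fin F → ℝ) (i : Fin d),
            (∑ r : Fin R,
                p.2 i r * ∏ ℓ : Fin k, (∑ j : Fin (F + 1), p.1 j r * homCoord (x ℓ) j))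
              = σ' (∑ r' : Fin R',
                  M i r' * σ (∑ ℓ : Fin k, ∑ j : Fin F, V j r' * x ℓ j))} = 0 := by
  obtain ⟨m, rfl⟩ : ∃ m, k = m + 2 := ⟨k - 2, by omega⟩
  have : Nonempty (Fin R) := ⟨⟨0, hR⟩⟩
  let i : Fin d := ⟨0, hd⟩
  let e : Fin F := ⟨0, hF⟩
  refine measure_mono_null ?_
    (volume_setOf_sum_mul_sq_mul_pow_eq_zero i e.castSucc (Fin.last F) m)
  rintro ⟨W, A⟩ ⟨R', -, M, V, σ, σ', hWA⟩
  replace hWA : ∀ x, cpLayer W A x = sumPooling M V σ σ' x := fun x => funext (hWA x)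
  have hsum : ∑ ℓ, pairInput (m := m) (Pi.single e 1) (Pi.single e 1) ℓ =
      ∑ ℓ, pairInput (m := m) (Pi.single e 2) 0 ℓ := by
    rw [sum_pairInput, sum_pairInput, ← Pi.single_add, one_add_one_eq_two, add_zero]
  rw [Set.mem_ofPred_eq, ← cpLayer_sub_cpLayer W A e i, hWA, hWA,
    sumPooling_eq_of_sum_eq M V σ σ' hsum, sub_self]
end
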